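/- arXiv:1102.0948 — 3 statements merged into one kernel-verified Lean document; each statement's English description precedes it below -/
import Mathlib

section
/- Let Q: L(H_n) → L(H_n) be a linear map and c ∈ ℝ. Then the gate fidelity F_Q(|φ⟩) = ⟨φ|Q(|φ⟩⟨φ|)|φ⟩ equals c for every unit vector |φ⟩ ∈ H_n if and only if P_S (T ⊗ id_n)(C_Q) P_S = c·P_S. -/
/-!
Writing `N = (T ⊗ id)(C_Q) - c`, the Choi correspondence gives
`F_Q(φ) - c = ⟨φφ|N|φφ⟩` for unit `φ`, and by homogeneity of degree four the unit-norm
restriction can be dropped. Since `φ ⊗ φ` is fixed by the real symmetric projection `P_S`,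
`⟨φφ|N|φφ⟩ = ⟨φφ|P_S N P_S|φφ⟩`, which gives one direction. Conversely, polarizing in `φ`
(substituting `φ + tψ`, `t ∈ ℂ`, and extracting the `t²` coefficient) yields `⟨φφ|N|ψψ⟩ = 0`,
and the vectors `φ ⊗ φ` span the symmetric subspace because
`|ij⟩ + |ji⟩ = (e_i + e_j)^{⊗2} - e_i^{⊗2} - e_j^{⊗2}`; hence `P_S N P_S = 0`.
-/

open Matrix BigOperators
open scoped ComplexOrder

noncomputable section

/-- |φ⟩⟨φ| as a matrix. -/
def ketbra {n : ℕ} (φ : Fin n → ℂ) : Matrix (Fin n) (Fin n) ℂ :=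
  Matrix.vecMulVec φ (star φ)

/-- Quadratic form ⟨v|M|v⟩. -/
def qf {m : Type*} [Fintype m] (M : Matrix m m ℂ) (v : m → ℂ) : ℂ :=
  star v ⬝ᵥ M *ᵥ v

/-- Tensor (Kronecker) product of vectors |ψ⟩⊗|χ⟩. -/
def kron {n : ℕ} (ψ χ : Fin n → ℂ) : Fin n × Fin n → ℂ :=
  fun p => ψ p.1 * χ p.2

/-- Unit vector predicate. -/
def unitv {n : ℕ} (φ : Fin n → ℂ) : Prop := star φ ⬝ᵥ φ = 1

/-- Linear maps on L(H_n), represented as linear maps on n×n matrices. -/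
abbrev MatMap (n : ℕ) := Matrix (Fin n) (Fin n) ℂ →ₗ[ℂ] Matrix (Fin n) (Fin n) ℂ

/-- Choi matrix C_Λ = Σ_{i,j} |i⟩⟨j| ⊗ Λ(|i⟩⟨j|). -/
def choi {n : ℕ} (Λ : MatMap n) : Matrix (Fin n × Fin n) (Fin n × Fin n) ℂ :=
  Matrix.of fun p q => Λ (Matrix.single p.1 q.1 1) p.2 q.2

/-- Partial transpose on the first factor, i.e. (T ⊗ id_n)(M). -/
def ptA {n : ℕ} (M : Matrix (Fin n × Fin n) (Fin n × Fin n) ℂ) :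
    Matrix (Fin n × Fin n) (Fin n × Fin n) ℂ :=
  Matrix.of fun p q => M (q.1, p.2) (p.1, q.2)

/-- The flip (swap) operator F on H_n ⊗ H_n. -/
def flipOp (n : ℕ) : Matrix (Fin n × Fin n) (Fin n × Fin n) ℂ :=
  Matrix.of fun p q => if p.1 = q.2 ∧ p.2 = q.1 then 1 else 0

/-- Projection onto the symmetric subspace, P_S = (1/2)(I + F). -/
def Psym (n : ℕ) : Matrix (Fin n × Fin n) (Fin n × Fin n) ℂ :=
  (1/2 : ℂ) • (1 + flipOp n)

/-- Gate fidelity F_Λ(|φ⟩) = ⟨φ|Λ(|φ⟩⟨φ|)|φ⟩. -/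
def fid {n : ℕ} (Λ : MatMap n) (φ : Fin n → ℂ) : ℂ := qf (Λ (ketbra φ)) φ

/-- Trace preserving. -/
def IsTP {n : ℕ} (Λ : MatMap n) : Prop := ∀ X, (Λ X).trace = X.trace

/-- Completely positive (via Choi's theorem: Choi matrix PSD). -/
def IsCP {n : ℕ} (Λ : MatMap n) : Prop := (choi Λ).PosSemidef

/-- Quantum channel: completely positive and trace preserving. -/
def IsChannel {n : ℕ} (Λ : MatMap n) : Prop := IsCP Λ ∧ IsTP Λ

/-- Λd is the Hilbert–Schmidt dual of Λ : Tr(Λ(X)Y) = Tr(X Λd(Y)). -/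
def IsDual {n : ℕ} (Λ Λd : MatMap n) : Prop :=
  ∀ X Y, (Λ X * Y).trace = (X * Λd Y).trace

/-- Standard basis vector. -/
def stdV (n : ℕ) (i : Fin n) : Fin n → ℂ := Pi.single i 1

/-- The symmetric subspace S = span{|i⟩|j⟩ + |j⟩|i⟩}. -/
def Ssub (n : ℕ) : Submodule ℂ (Fin n × Fin n → ℂ) :=
  Submodule.span ℂ {v | ∃ i j, v = kron (stdV n i) (stdV n j) + kron (stdV n j) (stdV n i)}

/-- The maximally entangled state |ψ₊⟩ = (1/√n) Σ_j |jj⟩. -/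
def psiPlus (n : ℕ) : Fin n × Fin n → ℂ :=
  fun p => if p.1 = p.2 then ((Real.sqrt n : ℂ))⁻¹ else 0

open ComplexConjugate

section Flip

variable {n : ℕ}

lemma flipOp_mul (A : Matrix (Fin n × Fin n) (Fin n × Fin n) ℂ) :
    flipOp n * A = Matrix.of fun p q => A (p.2, p.1) q := by
  ext p q
  simp [flipOp, Matrix.mul_apply, Fintype.sum_prod_type, ite_and]

lemma mul_flipOp (A : Matrix (Fin n × Fin n) (Fin n × Fin n) ℂ) :
    A * flipOp n = Matrix.of fun p q => A p (q.2, q.1) := by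
  ext p q
  rw [Matrix.mul_apply, Fintype.sum_prod_type, Finset.sum_comm]
  simp [flipOp, ite_and]

lemma flipOp_mul_self : flipOp n * flipOp n = 1 := by
  rw [flipOp_mul]
  ext p q
  simp [flipOp, Matrix.one_apply, Prod.ext_iff, and_comm]

lemma flipOp_transpose : (flipOp n)ᵀ = flipOp n := by
  ext p q
  simp only [flipOp, Matrix.transpose_apply, Matrix.of_apply]
  exact if_congr ⟨fun h => ⟨h.2.symm, h.1.symm⟩, fun h => ⟨h.2.symm, h.1.symm⟩⟩ rfl rfl

lemma flipOp_mulVec (v : Fin n × Fin n → ℂ) : flipOp n *ᵥ v = fun p => v (p.2, p.1) := by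
  funext p
  simp [flipOp, Matrix.mulVec, dotProduct, Fintype.sum_prod_type, ite_and]

lemma Psym_mul_self : Psym n * Psym n = Psym n := by
  simp only [Psym, Matrix.smul_mul, Matrix.mul_smul, add_mul, mul_add, one_mul, mul_one,
    flipOp_mul_self]
  module

lemma Psym_transpose : (Psym n)ᵀ = Psym n := by
  simp [Psym, Matrix.transpose_add, flipOp_transpose]

lemma Psym_mul_mul_Psym_apply (M : Matrix (Fin n × Fin n) (Fin n × Fin n) ℂ)
    (p q : Fin n × Fin n) :
    (Psym n * M * Psym n) p q =
      (M p q + M (p.2, p.1) q + M p (q.2, q.1) + M (p.2, p.1) (q.2, q.1)) / 4 := by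
  simp only [Psym, Matrix.smul_mul, Matrix.mul_smul, add_mul, mul_add, one_mul, mul_one,
    flipOp_mul, mul_flipOp, Matrix.add_apply, Matrix.smul_apply, Matrix.of_apply, smul_eq_mul]
  ring

lemma Psym_mulVec_of_swap_eq {v : Fin n × Fin n → ℂ} (hv : ∀ p, v (p.2, p.1) = v p) :
    Psym n *ᵥ v = v := by
  funext p
  simp only [Psym, one_div, smul_add, add_mulVec, smul_mulVec, one_mulVec, flipOp_mulVec, hv,
    Pi.add_apply, Pi.smul_apply, smul_eq_mul]
  ring

end Flip

section QuadraticForm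

variable {m : Type*} [Fintype m]

lemma qf_smul (M : Matrix m m ℂ) (s : ℂ) (v : m → ℂ) : qf M (s • v) = conj s * s * qf M v := by
  simp only [qf, star_smul, smul_dotProduct, Matrix.mulVec_smul, dotProduct_smul, smul_eq_mul,
    Complex.star_def]
  ring

lemma qf_sub_smul_one [DecidableEq m] (M : Matrix m m ℂ) (a : ℂ) (v : m → ℂ) :
    qf (M - a • 1) v = qf M v - a * (star v ⬝ᵥ v) := by
  simp [qf, Matrix.sub_mulVec, Matrix.smul_mulVec, dotProduct_sub]

lemma qf_add_smul_add_sq_smul (M : Matrix m m ℂ) (u w z : m → ℂ) (t : ℂ) :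
    qf M (u + t • w + t ^ 2 • z) =
      qf M u + t * (star u ⬝ᵥ M *ᵥ w) + t ^ 2 * (star u ⬝ᵥ M *ᵥ z)
        + conj t * (star w ⬝ᵥ M *ᵥ u) + conj t * t * qf M w
        + conj t * t ^ 2 * (star w ⬝ᵥ M *ᵥ z)
        + conj t ^ 2 * (star z ⬝ᵥ M *ᵥ u) + conj t ^ 2 * t * (star z ⬝ᵥ M *ᵥ w)
        + conj t ^ 2 * t ^ 2 * qf M z := by
  simp only [qf, star_add, star_smul, add_dotProduct, smul_dotProduct, dotProduct_add,
    dotProduct_smul, Matrix.mulVec_add, Matrix.mulVec_smul, smul_eq_mul, Complex.star_def,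
    map_pow]
  ring

lemma qf_Psym_mul_mul_Psym {n : ℕ} (M : Matrix (Fin n × Fin n) (Fin n × Fin n) ℂ)
    {v : Fin n × Fin n → ℂ} (hv : ∀ p, v (p.2, p.1) = v p) :
    qf (Psym n * M * Psym n) v = qf M v := by
  have hPv : Psym n *ᵥ v = v := Psym_mulVec_of_swap_eq hv
  have hPv' : Psym n *ᵥ star v = star v := Psym_mulVec_of_swap_eq fun p => by simp [hv]
  rw [qf, ← Matrix.mulVec_mulVec, ← Matrix.mulVec_mulVec, hPv, Matrix.dotProduct_mulVec,
    ← Matrix.mulVec_transpose, Psym_transpose, hPv', qf]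

end QuadraticForm

section Kron

variable {n : ℕ}

lemma kron_swap (φ : Fin n → ℂ) (p : Fin n × Fin n) : kron φ φ (p.2, p.1) = kron φ φ p :=
  mul_comm _ _

lemma star_kron (x y : Fin n → ℂ) : star (kron x y) = kron (star x) (star y) := by
  funext p; simp [kron]

lemma kron_dotProduct_kron (x y z w : Fin n → ℂ) :
    kron x y ⬝ᵥ kron z w = (x ⬝ᵥ z) * (y ⬝ᵥ w) := by
  simp only [dotProduct, kron, Fintype.sum_prod_type, Finset.sum_mul_sum]
  exact Finset.sum_congr rfl fun i _ => Finset.sum_congr rfl fun j _ => by ring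

lemma kron_smul_smul (s : ℂ) (φ : Fin n → ℂ) : kron (s • φ) (s • φ) = (s * s) • kron φ φ := by
  funext p; simp only [kron, Pi.smul_apply, smul_eq_mul]; ring

lemma kron_add_smul_self (φ ψ : Fin n → ℂ) (t : ℂ) :
    kron (φ + t • ψ) (φ + t • ψ) = kron φ φ + t • (kron φ ψ + kron ψ φ) + t ^ 2 • kron ψ ψ := by
  funext p; simp only [kron, Pi.add_apply, Pi.smul_apply, smul_eq_mul]; ring

lemma kron_single_one (a b : Fin n) :
    kron (Pi.single a (1 : ℂ)) (Pi.single b 1) = Pi.single (a, b) 1 := by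
  funext p
  by_cases h1 : p.1 = a <;> by_cases h2 : p.2 = b <;>
    simp [kron, Pi.single_apply, Prod.ext_iff, h1, h2]

lemma kron_symm_eq_sub (x y : Fin n → ℂ) :
    kron x y + kron y x = kron (x + y) (x + y) - kron x x - kron y y := by
  funext p; simp only [kron, Pi.add_apply, Pi.sub_apply]; ring

end Kron

lemma LinearMap.apply_matrix_eq_sum_single {R M ι κ : Type*} [CommSemiring R] [AddCommMonoid M]
    [Module R M] [Fintype ι] [Fintype κ] [DecidableEq ι] [DecidableEq κ]
    (f : Matrix ι κ R →ₗ[R] M) (X : Matrix ι κ R) :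
    f X = ∑ i, ∑ j, X i j • f (Matrix.single i j 1) := by
  conv_lhs => rw [Matrix.matrix_eq_sum_single X]
  simp only [map_sum, ← map_smul, Matrix.smul_single, smul_eq_mul, mul_one]

lemma fid_eq_qf_ptA_choi {n : ℕ} (Q : MatMap n) (φ : Fin n → ℂ) :
    fid Q φ = qf (ptA (choi Q)) (kron φ φ) := by
  rw [fid, qf, qf, LinearMap.apply_matrix_eq_sum_single]
  simp only [ketbra, Matrix.vecMulVec_apply, dotProduct, Matrix.mulVec, Matrix.sum_apply,
    Matrix.smul_apply, Fintype.sum_prod_type, Finset.mul_sum, Finset.sum_mul, ptA, choi, kron,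
    Matrix.of_apply, Pi.star_apply, star_mul', smul_eq_mul]
  conv_lhs => enter [2, k, 2, l]; rw [Finset.sum_comm]
  conv_lhs => enter [2, k]; rw [Finset.sum_comm]
  conv_lhs => rw [Finset.sum_comm]
  conv_lhs => enter [2, j, 2, k]; rw [Finset.sum_comm]
  refine Finset.sum_congr rfl fun j _ => Finset.sum_congr rfl fun k _ =>
    Finset.sum_congr rfl fun i _ => Finset.sum_congr rfl fun l _ => ?_
  ring

lemma eq_zero_of_forall_sq_add_conj_mul_add_conj_sq {a b c : ℂ}
    (h : ∀ t : ℂ, t ^ 2 * a + conj t * t * b + conj t ^ 2 * c = 0) : a = 0 := by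
  have h1 := h 1
  have h2 := h Complex.I
  have h3 := h (1 + Complex.I)
  simp only [map_one, map_add, Complex.conj_I] at h1 h2 h3
  linear_combination (-Complex.I / 4) * (h3 - h1 - h2 + Complex.I * (h1 - h2))
    + (a * (1 - Complex.I ^ 2 / 4) + (b - c) * Complex.I ^ 2 / 4) * Complex.I_sq

section Polarization

variable {n : ℕ} {N : Matrix (Fin n × Fin n) (Fin n × Fin n) ℂ}

lemma dotProduct_kron_self_mulVec_kron_self_eq_zero (H : ∀ φ, qf N (kron φ φ) = 0)
    (φ ψ : Fin n → ℂ) : star (kron φ φ) ⬝ᵥ N *ᵥ kron ψ ψ = 0 := by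
  refine eq_zero_of_forall_sq_add_conj_mul_add_conj_sq (b := qf N (kron φ ψ + kron ψ φ))
    (c := star (kron ψ ψ) ⬝ᵥ N *ᵥ kron φ φ) fun t => ?_
  have hp := H (φ + t • ψ)
  -- averaging the expansions at `t` and `-t` kills the terms of odd degree in `t`
  have hm := H (φ + (-t) • ψ)
  rw [kron_add_smul_self, qf_add_smul_add_sq_smul] at hp hm
  simp only [map_neg] at hm
  linear_combination (hp + hm) / 2 - H φ - conj t ^ 2 * t ^ 2 * H ψ

lemma Psym_mul_mul_Psym_eq_zero_of_qf_kron_self (H : ∀ φ, qf N (kron φ φ) = 0) :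
    Psym n * N * Psym n = 0 := by
  have key := dotProduct_kron_self_mulVec_kron_self_eq_zero H
  have hsym (a b c d : Fin n) :
      star (kron (Pi.single a 1) (Pi.single b 1) + kron (Pi.single b 1) (Pi.single a 1)) ⬝ᵥ
        N *ᵥ (kron (Pi.single c 1) (Pi.single d 1) + kron (Pi.single d 1) (Pi.single c 1)) = 0 := by
    simp [kron_symm_eq_sub, star_sub, sub_dotProduct, dotProduct_sub, Matrix.mulVec_sub, key]
  ext p q
  have hpq := hsym p.1 p.2 q.1 q.2
  simp only [kron_single_one, Prod.mk.eta, star_add, Pi.star_single, star_one, mulVec_add,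
    mulVec_single, MulOpposite.op_one, one_smul, dotProduct_add, add_dotProduct, single_dotProduct,
    col_apply, one_mul] at hpq
  rw [Psym_mul_mul_Psym_apply, Matrix.zero_apply]
  linear_combination hpq / 4

lemma Psym_mul_mul_Psym_eq_zero_iff :
    Psym n * N * Psym n = 0 ↔ ∀ φ, qf N (kron φ φ) = 0 := by
  refine ⟨fun h φ => ?_, Psym_mul_mul_Psym_eq_zero_of_qf_kron_self⟩
  rw [← qf_Psym_mul_mul_Psym N (kron_swap φ), h]
  simp [qf]

end Polarization

lemma forall_unitv_qf_kron_self_iff {n : ℕ} (N : Matrix (Fin n × Fin n) (Fin n × Fin n) ℂ) :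
    (∀ φ, unitv φ → qf N (kron φ φ) = 0) ↔ ∀ φ, qf N (kron φ φ) = 0 := by
  refine ⟨fun h φ => ?_, fun h φ _ => h φ⟩
  rcases eq_or_ne φ 0 with rfl | hφ
  · rw [show kron (0 : Fin n → ℂ) 0 = 0 from funext fun _ => zero_mul _]
    simp [qf]
  have hpos : 0 < star φ ⬝ᵥ φ := (dotProduct_star_self_nonneg φ).lt_of_ne
    (Ne.symm (mt dotProduct_star_self_eq_zero.1 hφ))
  set r := (star φ ⬝ᵥ φ).re
  have hr : star φ ⬝ᵥ φ = r := Complex.eq_re_of_ofReal_le hpos.le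
  have hr0 : 0 < r := (Complex.pos_iff.1 hpos).1
  have hsqrt : (Real.sqrt r : ℂ) ≠ 0 := Complex.ofReal_ne_zero.2 (Real.sqrt_pos.2 hr0).ne'
  have hrsq : (r : ℂ) = (Real.sqrt r : ℂ) ^ 2 := by
    rw [← Complex.ofReal_pow, Real.sq_sqrt hr0.le]
  set s : ℂ := (Real.sqrt r : ℂ)⁻¹
  have hs0 : s ≠ 0 := inv_ne_zero hsqrt
  have hunit : unitv (s • φ) := by
    rw [unitv, star_smul, smul_dotProduct, dotProduct_smul, hr, hrsq]
    simp only [s, smul_eq_mul, star_inv₀, Complex.star_def, Complex.conj_ofReal]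
    field_simp
  have := h _ hunit
  rw [kron_smul_smul, qf_smul] at this
  simpa [hs0] using this

theorem stmt10 {n : ℕ} (Q : MatMap n) (c : ℝ) :
    (∀ φ : Fin n → ℂ, unitv φ → fid Q φ = (c : ℂ)) ↔
      Psym n * ptA (choi Q) * Psym n = (c : ℂ) • Psym n := by
  set N := ptA (choi Q) - (c : ℂ) • 1
  have hfid : ∀ φ, unitv φ → fid Q φ - c = qf N (kron φ φ) := fun φ hφ => by
    rw [qf_sub_smul_one, star_kron, kron_dotProduct_kron, hφ, fid_eq_qf_ptA_choi]
    ring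
  have hsandwich : Psym n * N * Psym n = Psym n * ptA (choi Q) * Psym n - (c : ℂ) • Psym n := by
    simp [N, mul_sub, sub_mul, Psym_mul_self]
  calc (∀ φ, unitv φ → fid Q φ = c) ↔ ∀ φ, unitv φ → qf N (kron φ φ) = 0 :=
        forall₂_congr fun φ hφ => by rw [← hfid φ hφ, sub_eq_zero]
    _ ↔ Psym n * N * Psym n = 0 := by
        rw [forall_unitv_qf_kron_self_iff, Psym_mul_mul_Psym_eq_zero_iff]
    _ ↔ _ := by rw [hsandwich, sub_eq_zero]
end
end

section
/- Let Q, R: L(H_2) → L(H_2) be quantum channels on a qubit with equal gate fidelity (⟨φ|Q(|φ⟩⟨φ|)|φ⟩ = ⟨φ|R(|φ⟩⟨φ|)|φ⟩ for all unit |φ⟩). Then there exist r ≥ 0 and a unital quantum channel E: L(H_2) → L(H_2) such that R = Q + r(E − E†). -/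
open Matrix BigOperators
open scoped ComplexOrder

noncomputable section

/-!
Put `D = R - Q`. Equal gate fidelities say that `⟨φ|D(|φ⟩⟨φ|)|φ⟩ = 0` for every `φ`. On a qubit,
with `φ = (1, z)`, this is a polynomial in `z` and `z̄` of bidegree `(2, 2)`. Its nine coefficients
vanish, and together with `Tr ∘ D = 0` this says exactly that `D` is anti-self-dual: `D† = -D`.

Now let `D` be any anti-self-dual difference of two channels on `ℂⁿ` and let `Δ` be the completely
depolarizing channel. Then `E = Δ + D / n²` is a unital channel with `E† = Δ - D / n²`: its Choi
matrix `(C_R + (n • 1 - C_Q)) / n²` is positive because `C_Q ≤ (Tr C_Q) • 1 = n • 1`. Hence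
`R = Q + (n² / 2) (E - E†)`.
-/

open ComplexConjugate

lemma Matrix.PosSemidef.posSemidef_trace_smul_one_sub {𝕜 ι : Type*} [RCLike 𝕜] [Fintype ι]
    [DecidableEq ι] {A : Matrix ι ι 𝕜} (hA : A.PosSemidef) :
    (A.trace • (1 : Matrix ι ι 𝕜) - A).PosSemidef := by
  set ev := hA.1.eigenvalues
  have hdiag : A.trace • (1 : Matrix ι ι 𝕜) - diagonal (RCLike.ofReal ∘ ev) =
      diagonal fun i => ∑ j ∈ Finset.univ.erase i, (ev j : 𝕜) := by
    ext i j
    rw [hA.1.trace_eq_sum_eigenvalues]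
    by_cases h : i = j <;> simp [h, ev, Finset.sum_erase_eq_sub]
  have hconj := congrArg (Unitary.conjStarAlgAut 𝕜 _ hA.1.eigenvectorUnitary) hdiag
  rw [map_sub, map_smul, map_one, ← hA.1.spectral_theorem, Unitary.conjStarAlgAut_apply] at hconj
  rw [hconj]
  refine (PosSemidef.diagonal fun i => ?_).mul_mul_conjTranspose_same _
  exact Finset.sum_nonneg fun j _ => RCLike.ofReal_nonneg.mpr (hA.eigenvalues_nonneg j)

section General

variable {n : ℕ}

lemma single_eq_smul_single_one {m : Type*} [DecidableEq m] (i j : m) (x : ℂ) :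
    single i j x = x • single i j (1 : ℂ) := by
  rw [smul_single, smul_eq_mul, mul_one]

lemma apply_eq_sum_choi (Λ : MatMap n) (X : Matrix (Fin n) (Fin n) ℂ) (a b : Fin n) :
    Λ X a b = ∑ i, ∑ j, X i j * choi Λ (i, a) (j, b) := by
  conv_lhs => rw [matrix_eq_sum_single X]
  simp only [map_sum, Matrix.sum_apply, single_eq_smul_single_one _ _ (X _ _), map_smul,
    Matrix.smul_apply, smul_eq_mul]
  rfl

lemma fid_eq_sum_choi (Λ : MatMap n) (φ : Fin n → ℂ) :
    fid Λ φ = ∑ a, ∑ b, ∑ i, ∑ j,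
      conj (φ a) * φ b * φ i * conj (φ j) * choi Λ (i, a) (j, b) := by
  simp only [fid, qf, ketbra, dotProduct, mulVec, apply_eq_sum_choi, vecMulVec_apply,
    Pi.star_apply, Finset.mul_sum, Finset.sum_mul]
  refine Fintype.sum_congr _ _ fun a => Fintype.sum_congr _ _ fun b =>
    Fintype.sum_congr _ _ fun i => Fintype.sum_congr _ _ fun j => ?_
  simp only [Complex.star_def]
  ring

lemma fid_smul (Λ : MatMap n) (c : ℂ) (φ : Fin n → ℂ) :
    fid Λ (c • φ) = (conj c * c) ^ 2 * fid Λ φ := by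
  simp only [fid_eq_sum_choi, Finset.mul_sum, Pi.smul_apply, smul_eq_mul, map_mul]
  refine Fintype.sum_congr _ _ fun a => Fintype.sum_congr _ _ fun b =>
    Fintype.sum_congr _ _ fun i => Fintype.sum_congr _ _ fun j => ?_
  ring

lemma fid_eq_zero_of_forall_unitv {Λ : MatMap n} (h : ∀ φ, unitv φ → fid Λ φ = 0)
    (φ : Fin n → ℂ) : fid Λ φ = 0 := by
  rcases eq_or_ne φ 0 with rfl | hφ
  · simp [fid_eq_sum_choi]
  obtain ⟨s, hs, hsφ⟩ := RCLike.pos_iff_exists_ofReal.mp (dotProduct_star_self_pos_iff.mpr hφ)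
  change (s : ℂ) = _ at hsφ
  set c : ℂ := (((Real.sqrt s)⁻¹ : ℝ) : ℂ)
  have hc : conj c * c = (s : ℂ)⁻¹ := by
    rw [Complex.conj_ofReal, ← Complex.ofReal_mul, ← mul_inv, Real.mul_self_sqrt hs.le,
      Complex.ofReal_inv]
  have hunit : unitv (c • φ) := by
    rw [unitv, star_smul, smul_dotProduct, dotProduct_smul, ← hsφ, smul_eq_mul, smul_eq_mul,
      ← mul_assoc, Complex.star_def, hc, inv_mul_cancel₀ (by exact_mod_cast hs.ne')]
  have := h _ hunit
  rw [fid_smul, hc] at this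
  simpa [hs.ne'] using this

lemma fid_sub (Λ Γ : MatMap n) (φ : Fin n → ℂ) : fid (Λ - Γ) φ = fid Λ φ - fid Γ φ := by
  simp only [fid, qf, LinearMap.sub_apply, sub_mulVec, dotProduct_sub]

lemma IsTP.trace_sub_apply {Λ Γ : MatMap n} (hΛ : IsTP Λ) (hΓ : IsTP Γ)
    (X : Matrix (Fin n) (Fin n) ℂ) : ((Λ - Γ) X).trace = 0 := by
  rw [LinearMap.sub_apply, trace_sub, hΛ X, hΓ X, sub_self]

lemma isDual_of_single {Λ Λd : MatMap n}
    (h : ∀ i j k l, (Λ (single i j 1) * single k l 1).trace =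
      (single i j 1 * Λd (single k l 1)).trace) : IsDual Λ Λd := by
  intro X Y
  rw [matrix_eq_sum_single X, matrix_eq_sum_single Y]
  simp only [single_eq_smul_single_one _ _ (X _ _), single_eq_smul_single_one _ _ (Y _ _),
    map_sum, map_smul, Finset.sum_mul, Finset.mul_sum, smul_mul_smul_comm, trace_sum,
    trace_smul, h]

lemma IsDual.add {Λ Λd Γ Γd : MatMap n} (hΛ : IsDual Λ Λd) (hΓ : IsDual Γ Γd) :
    IsDual (Λ + Γ) (Λd + Γd) := by
  intro X Y
  simp only [LinearMap.add_apply, add_mul, mul_add, trace_add, hΛ X Y, hΓ X Y]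

lemma IsDual.smul {Λ Λd : MatMap n} (hΛ : IsDual Λ Λd) (c : ℂ) : IsDual (c • Λ) (c • Λd) := by
  intro X Y
  simp only [LinearMap.smul_apply, Matrix.smul_mul, Matrix.mul_smul, trace_smul, hΛ X Y]

lemma IsDual.apply_one_of_isTP {Λ Λd : MatMap n} (hΛ : IsDual Λ Λd) (hΛd : IsTP Λd) :
    Λ 1 = 1 :=
  ext_iff_trace_mul_right.mpr fun Y => by rw [hΛ, one_mul, one_mul, hΛd]

lemma IsTP.trace_choi {Λ : MatMap n} (hΛ : IsTP Λ) : (choi Λ).trace = n := by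
  calc (choi Λ).trace = ∑ i, (Λ (single i i 1)).trace := by
        simp only [trace, diag, choi, of_apply, Fintype.sum_prod_type]
    _ = n := by simp [hΛ _]

def depolarizing (n : ℕ) : MatMap n :=
  (n : ℂ)⁻¹ • (traceLinearMap (Fin n) ℂ ℂ).smulRight 1

lemma depolarizing_apply (X : Matrix (Fin n) (Fin n) ℂ) :
    depolarizing n X = ((n : ℂ)⁻¹ * X.trace) • 1 := by
  simp [depolarizing, smul_smul]

lemma choi_depolarizing : choi (depolarizing n) = (n : ℂ)⁻¹ • 1 := by
  ext ⟨i, a⟩ ⟨j, b⟩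
  rcases eq_or_ne i j with rfl | hij
  · simp [choi, depolarizing_apply, one_apply]
  · simp [choi, depolarizing_apply, one_apply, hij]

lemma isTP_depolarizing (hn : n ≠ 0) : IsTP (depolarizing n) := by
  intro X
  rw [depolarizing_apply, trace_smul, trace_one, Fintype.card_fin, smul_eq_mul,
    mul_right_comm, inv_mul_cancel₀ (Nat.cast_ne_zero.mpr hn), one_mul]

lemma isDual_depolarizing : IsDual (depolarizing n) (depolarizing n) := by
  intro X Y
  simp only [depolarizing_apply, Matrix.smul_mul, Matrix.mul_smul, Matrix.one_mul, Matrix.mul_one,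
    trace_smul, smul_eq_mul]
  ring

lemma choi_add (Λ Γ : MatMap n) : choi (Λ + Γ) = choi Λ + choi Γ := rfl

lemma choi_smul (c : ℂ) (Λ : MatMap n) : choi (c • Λ) = c • choi Λ := rfl

lemma choi_sub (Λ Γ : MatMap n) : choi (Λ - Γ) = choi Λ - choi Γ := rfl

theorem exists_unital_channel_of_isDual_neg_sub (hn : n ≠ 0) {Q R : MatMap n}
    (hQ : IsChannel Q) (hR : IsChannel R) (hD : IsDual (R - Q) (-(R - Q))) :
    ∃ r : ℝ, 0 ≤ r ∧ ∃ E Ed : MatMap n, IsChannel E ∧ E 1 = 1 ∧ IsDual E Ed ∧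
      R = Q + (r : ℂ) • (E - Ed) := by
  set D := R - Q
  set c : ℝ := ((n : ℝ) ^ 2)⁻¹
  have hc : (0 : ℂ) ≤ c := Complex.zero_le_real.mpr (by positivity)
  have hTP : ∀ s : ℂ, IsTP (depolarizing n + s • D) := fun s X => by
    rw [LinearMap.add_apply, LinearMap.smul_apply, trace_add, trace_smul,
      hR.2.trace_sub_apply hQ.2, smul_zero, add_zero, isTP_depolarizing hn X]
  have hdual : IsDual (depolarizing n + (c : ℂ) • D) (depolarizing n + (-(c : ℂ)) • D) := by
    have := isDual_depolarizing.add (hD.smul (c : ℂ))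
    rwa [smul_neg, ← neg_smul] at this
  have hCP : IsCP (depolarizing n + (c : ℂ) • D) := by
    have hchoi : choi (depolarizing n + (c : ℂ) • D) =
        (c : ℂ) • choi R + (c : ℂ) • ((choi Q).trace • 1 - choi Q) := by
      have hn' : (n : ℂ)⁻¹ = c * n := by
        push_cast [c]
        field_simp
      rw [choi_add, choi_smul, choi_sub, choi_depolarizing, hQ.2.trace_choi, hn']
      module
    rw [IsCP, hchoi]
    exact (hR.1.smul hc).add (hQ.1.posSemidef_trace_smul_one_sub.smul hc)
  refine ⟨n ^ 2 / 2, by positivity, _, _, ⟨hCP, hTP c⟩, hdual.apply_one_of_isTP (hTP _),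
    hdual, ?_⟩
  have hr : ((n ^ 2 / 2 : ℝ) : ℂ) * (2 * c) = 1 := by
    push_cast [c]
    field_simp
  linear_combination (norm := module) -hr • D

end General

lemma eq_zero_of_forall_sum_mul_pow_mul_conj_pow_eq_zero (c : Matrix (Fin 3) (Fin 3) ℂ)
    (h : ∀ z : ℂ, ∑ m : Fin 3, ∑ k : Fin 3, c m k * z ^ (m : ℕ) * conj z ^ (k : ℕ) = 0) :
    c = 0 := by
  simp only [Fin.sum_univ_three, Fin.val_zero, Fin.val_one, Fin.val_two, pow_zero, pow_one,
    mul_one] at h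
  -- the values at these eleven points determine all nine coefficients
  have := h 0; have := h 1; have := h (-1); have := h 2; have := h (-2); have := h Complex.I
  have := h (-Complex.I); have := h (2 * Complex.I); have := h (-(2 * Complex.I))
  have := h (1 + Complex.I); have := h (-(1 + Complex.I))
  clear h
  norm_num [Complex.ext_iff, pow_two] at *
  ext m k
  fin_cases m <;> fin_cases k <;>
    simp only [Fin.zero_eta, Fin.mk_one, Fin.reduceFinMk, Fin.isValue, Matrix.zero_apply,
      Complex.ext_iff, Complex.zero_re, Complex.zero_im] <;>
    constructor <;> linarith

def fidCoeff (D : MatMap 2) : Matrix (Fin 3) (Fin 3) ℂ :=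
  let C := choi D
  !![C (0, 0) (0, 0), C (0, 1) (0, 0) + C (0, 0) (1, 0), C (0, 1) (1, 0);
    C (0, 0) (0, 1) + C (1, 0) (0, 0),
      C (0, 1) (0, 1) + C (0, 0) (1, 1) + C (1, 1) (0, 0) + C (1, 0) (1, 0),
      C (0, 1) (1, 1) + C (1, 1) (1, 0);
    C (1, 0) (0, 1), C (1, 1) (0, 1) + C (1, 0) (1, 1), C (1, 1) (1, 1)]

lemma fid_cons_one (D : MatMap 2) (z : ℂ) :
    fid D ![1, z] = ∑ m : Fin 3, ∑ k : Fin 3, fidCoeff D m k * z ^ (m : ℕ) * conj z ^ (k : ℕ) := by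
  rw [fid_eq_sum_choi, fidCoeff]
  simp only [Fin.sum_univ_three, Fin.sum_univ_two, Fin.isValue, of_apply, cons_val',
    cons_val_zero, cons_val_one, cons_val_two, cons_val_fin_one, Fin.val_zero,
    Fin.val_one, Fin.val_two, map_one, vecHead, vecTail, Function.comp_apply,
    Fin.succ_zero_eq_one]
  ring

theorem isDual_neg_of_fid_eq_zero {D : MatMap 2} (htr : ∀ X, (D X).trace = 0)
    (hfid : ∀ φ, fid D φ = 0) : IsDual D (-D) := by
  have hc : fidCoeff D = 0 :=
    eq_zero_of_forall_sum_mul_pow_mul_conj_pow_eq_zero _ fun z => by rw [← fid_cons_one, hfid]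
  rw [← Matrix.ext_iff] at hc
  simp only [fidCoeff, Fin.forall_fin_succ, Fin.isValue, of_apply, cons_val', cons_val_zero,
    cons_val_succ, empty_val', cons_val_fin_one, IsEmpty.forall_iff, and_true,
    Matrix.zero_apply] at hc
  obtain ⟨⟨h00, h01, h02⟩, ⟨h10, h11, h12⟩, h20, h21, h22⟩ := hc
  set C := choi D
  have htp : ∀ i, C (i, 0) (i, 0) + C (i, 1) (i, 1) = 0 := fun i => by
    simpa [trace, Fin.sum_univ_two, C, choi] using htr (single i i 1)
  have r1 : C (0, 1) (0, 1) = 0 := by linear_combination htp 0 - h00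
  have r2 : C (1, 0) (1, 0) = 0 := by linear_combination htp 1 - h22
  have r3 : C (1, 1) (0, 0) = -C (0, 0) (1, 1) := by linear_combination h11 - r1 - r2
  have r4 : C (0, 1) (0, 0) = -C (0, 0) (1, 0) := by linear_combination h01
  have r5 : C (1, 0) (0, 0) = -C (0, 0) (0, 1) := by linear_combination h10
  have r6 : C (1, 1) (1, 0) = -C (0, 1) (1, 1) := by linear_combination h12
  have r7 : C (1, 1) (0, 1) = -C (1, 0) (1, 1) := by linear_combination h21
  refine isDual_of_single fun i j k l => ?_
  simp only [trace_mul_single, trace_single_mul, MulOpposite.op_one, one_smul,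
    LinearMap.neg_apply]
  change C (i, l) (j, k) = -C (k, j) (l, i)
  fin_cases i <;> fin_cases j <;> fin_cases k <;> fin_cases l <;>
    simp [h00, h02, h20, h22, r1, r2, r3, r4, r5, r6, r7]

theorem stmt14 (Q R : MatMap 2) (hQ : IsChannel Q) (hR : IsChannel R)
    (hfid : ∀ φ : Fin 2 → ℂ, unitv φ → fid Q φ = fid R φ) :
    ∃ r : ℝ, 0 ≤ r ∧ ∃ E Ed : MatMap 2, IsChannel E ∧ E 1 = 1 ∧ IsDual E Ed ∧
      R = Q + (r : ℂ) • (E - Ed) := by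
  refine exists_unital_channel_of_isDual_neg_sub two_ne_zero hQ hR
    (isDual_neg_of_fid_eq_zero (hR.2.trace_sub_apply hQ.2) ?_)
  exact fid_eq_zero_of_forall_unitv fun φ hφ => by rw [fid_sub, hfid φ hφ, sub_self]
end
end

section
/- Let |ψ⟩, |χ⟩ ∈ H_n be unit vectors with ⟨ψ|χ⟩ real. Then the vector (1/2)(|ψ⟩⊗|χ⟩ + |χ⟩⊗|ψ⟩) can be written as α|ρ⟩⊗|ρ⟩ + β|σ⟩⊗|σ⟩ for some unit vectors |ρ⟩, |σ⟩ and reals α, β ≥ 0 with α + β = 1; explicitly α, β are the square roots of (1/4)(⟨ψ|χ⟩² ± 2⟨ψ|χ⟩ + 1), i.e., α = (1/2)|1 + ⟨ψ|χ⟩| and β = (1/2)|1 − ⟨ψ|χ⟩|. -/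
open Matrix BigOperators
open scoped ComplexOrder

noncomputable section

/-! The symmetrization is a difference of two symmetric product vectors by polarization,
`½(ψ⊗χ + χ⊗ψ) = ¼(ψ+χ)⊗(ψ+χ) - ¼(ψ-χ)⊗(ψ-χ)`, and `‖ψ ± χ‖² = 2 ± 2t` because the overlap is
real. Normalizing `ψ ± χ` gives the coefficients `(1 ± t)/2`, and the minus sign is absorbed by
the phase `i`, since `(iσ)⊗(iσ) = -σ⊗σ`. -/

open Complex

lemma kron_smul_smul_s18 {n : ℕ} (a b : ℂ) (v w : Fin n → ℂ) :
    kron (a • v) (b • w) = (a * b) • kron v w := by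
  funext p
  simp only [kron, Pi.smul_apply, smul_eq_mul]
  ring

lemma smul_kron_add_kron_swap {n : ℕ} (ψ χ : Fin n → ℂ) :
    (1 / 2 : ℂ) • (kron ψ χ + kron χ ψ) =
      (1 / 4 : ℂ) • kron (ψ + χ) (ψ + χ) + (1 / 4 : ℂ) • -kron (ψ - χ) (ψ - χ) := by
  funext p
  simp only [kron, Pi.add_apply, Pi.sub_apply, Pi.neg_apply, Pi.smul_apply, smul_eq_mul]
  ring

lemma exists_unitv_kron_self_eq {n : ℕ} {u : Fin n → ℂ} (hu : unitv u) (v : Fin n → ℂ) :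
    ∃ ρ, unitv ρ ∧ kron v v = (star v ⬝ᵥ v) • kron ρ ρ := by
  by_cases hv : v = 0
  · refine ⟨u, hu, ?_⟩
    subst hv
    funext p
    simp [kron]
  set r := star v ⬝ᵥ v
  have hr_pos : 0 < r :=
    (dotProduct_star_self_nonneg v).lt_of_ne fun h => hv (dotProduct_star_self_eq_zero.mp h.symm)
  obtain ⟨hre, him⟩ := Complex.pos_iff.mp hr_pos
  set c : ℂ := ofReal (Real.sqrt r.re)
  have hc : c * c = r := by
    rw [← ofReal_mul, Real.mul_self_sqrt hre.le]
    exact Complex.ext (by simp) (by simp [him])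
  refine ⟨c⁻¹ • v, ?_, ?_⟩
  · rw [unitv, star_smul, smul_dotProduct, dotProduct_smul, star_inv₀, Complex.star_def,
      conj_ofReal, smul_smul, smul_eq_mul, ← mul_inv, hc, inv_mul_cancel₀ hr_pos.ne']
  · rw [kron_smul_smul_s18, smul_smul, ← mul_inv, hc, mul_inv_cancel₀ hr_pos.ne', one_smul]

lemma exists_unitv_neg_kron_self_eq {n : ℕ} {u : Fin n → ℂ} (hu : unitv u) (v : Fin n → ℂ) :
    ∃ σ, unitv σ ∧ -kron v v = (star v ⬝ᵥ v) • kron σ σ := by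
  obtain ⟨ρ, hρ, hv⟩ := exists_unitv_kron_self_eq hu v
  refine ⟨I • ρ, ?_, ?_⟩
  · rw [unitv, star_smul, smul_dotProduct, dotProduct_smul, hρ]
    simp
  · rw [kron_smul_smul_s18, I_mul_I, hv, smul_comm, neg_one_smul]

section RealOverlap

variable {n : ℕ} {ψ χ : Fin n → ℂ} {t : ℝ}

lemma star_add_dotProduct_add_of_unitv (hψ : unitv ψ) (hχ : unitv χ) (ht : star ψ ⬝ᵥ χ = t) :
    star (ψ + χ) ⬝ᵥ (ψ + χ) = ((2 + 2 * t : ℝ) : ℂ) := by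
  have ht' : star χ ⬝ᵥ ψ = t := by rw [star_dotProduct, ht]; simp
  rw [unitv] at hψ hχ
  simp only [star_add, add_dotProduct, dotProduct_add, hψ, hχ, ht, ht']
  push_cast; ring

lemma star_sub_dotProduct_sub_of_unitv (hψ : unitv ψ) (hχ : unitv χ) (ht : star ψ ⬝ᵥ χ = t) :
    star (ψ - χ) ⬝ᵥ (ψ - χ) = ((2 - 2 * t : ℝ) : ℂ) := by
  have ht' : star χ ⬝ᵥ ψ = t := by rw [star_dotProduct, ht]; simp
  rw [unitv] at hψ hχ
  simp only [star_sub, sub_dotProduct, dotProduct_sub, hψ, hχ, ht, ht']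
  push_cast; ring

lemma abs_le_one_of_unitv (hψ : unitv ψ) (hχ : unitv χ) (ht : star ψ ⬝ᵥ χ = t) : |t| ≤ 1 := by
  have hp := dotProduct_star_self_nonneg (ψ + χ)
  have hm := dotProduct_star_self_nonneg (ψ - χ)
  rw [star_add_dotProduct_add_of_unitv hψ hχ ht, Complex.zero_le_real] at hp
  rw [star_sub_dotProduct_sub_of_unitv hψ hχ ht, Complex.zero_le_real] at hm
  exact abs_le.mpr ⟨by linarith, by linarith⟩

end RealOverlap

theorem stmt18 {n : ℕ} (ψ χ : Fin n → ℂ) (hψ : unitv ψ) (hχ : unitv χ)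
    (t : ℝ) (ht : star ψ ⬝ᵥ χ = (t : ℂ)) :
    ∃ ρ σ : Fin n → ℂ, unitv ρ ∧ unitv σ ∧
      (1 / 2 : ℂ) • (kron ψ χ + kron χ ψ) =
        ((|1 + t| / 2 : ℝ) : ℂ) • kron ρ ρ + ((|1 - t| / 2 : ℝ) : ℂ) • kron σ σ ∧
      |1 + t| / 2 + |1 - t| / 2 = 1 := by
  obtain ⟨ρ, hρ, hρ_eq⟩ := exists_unitv_kron_self_eq hψ (ψ + χ)
  obtain ⟨σ, hσ, hσ_eq⟩ := exists_unitv_neg_kron_self_eq hψ (ψ - χ)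
  have ht_abs := abs_le.mp (abs_le_one_of_unitv hψ hχ ht)
  rw [abs_of_nonneg (by linarith : 0 ≤ 1 + t), abs_of_nonneg (by linarith : 0 ≤ 1 - t)]
  refine ⟨ρ, σ, hρ, hσ, ?_, by ring⟩
  rw [smul_kron_add_kron_swap, hρ_eq, hσ_eq, star_add_dotProduct_add_of_unitv hψ hχ ht,
    star_sub_dotProduct_sub_of_unitv hψ hχ ht, smul_smul, smul_smul]
  push_cast
  ring_nf
end
end
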